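/- Let X be a Banach space and let (A_m)_{m∈ℤ} be a sequence of bounded linear operators on X admitting an exponential dichotomy with constants C, λ > 0. Then for every bounded sequence y = (y_n)_{n∈ℤ} ⊂ X there exists a unique bounded sequence x = (x_n)_{n∈ℤ} ⊂ X such that x_{n+1} − A_n x_n = y_{n+1} for all n ∈ ℤ; moreover this x satisfies sup_n ‖x_n‖ ≤ C(1+e^{−λ})/(1−e^{−λ}) · sup_n ‖y_n‖. -/

import Mathlib

/-- The forward products `𝒜(m,n) = A_{m-1} ⋯ A_n` (equal to the identity when `m ≤ n`). -/
noncomputable def calA {X : Type*} [NormedAddCommGroup X] [NormedSpace ℝ X]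
    (A : ℤ → X →L[ℝ] X) (m n : ℤ) : X →L[ℝ] X :=
  (List.range (m - n).toNat).foldl (fun B k => (A (n + (k : ℤ))).comp B)
    (ContinuousLinearMap.id ℝ X)

/-- The sequence `(A_m)_{m ∈ ℤ}` admits an exponential dichotomy with constants `C, lam > 0`.
For `m ≤ n`, the operator `𝒜(m,n)` (the inverse of `𝒜(n,m)` restricted to `Ker P_m`)
is described implicitly: `w = 𝒜(m,n)(Id - P_n) x` iff `w ∈ Ker P_m` and
`𝒜(n,m) w = x - P_n x`. -/
def ExpDichotomy {X : Type*} [NormedAddCommGroup X] [NormedSpace ℝ X]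
    (A : ℤ → X →L[ℝ] X) (C lam : ℝ) : Prop :=
  ∃ P : ℤ → X →L[ℝ] X,
    (∀ m, (P m).comp (P m) = P m) ∧
    (∀ m, (P (m + 1)).comp (A m) = (A m).comp (P m)) ∧
    (∀ m, Set.BijOn (A m) (LinearMap.ker (P m : X →ₗ[ℝ] X) : Set X)
      (LinearMap.ker (P (m + 1) : X →ₗ[ℝ] X) : Set X)) ∧
    (∀ m n : ℤ, n ≤ m → ‖(calA A m n).comp (P n)‖ ≤ C * Real.exp (-lam * (m - n))) ∧
    (∀ m n : ℤ, m ≤ n → ∀ x w : X, w ∈ LinearMap.ker (P m : X →ₗ[ℝ] X) →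
      calA A n m w = x - P n x → ‖w‖ ≤ C * Real.exp (-lam * (n - m)) * ‖x‖)

/-!
The bounded solution is given by a Green's function: `G(n,k) = 𝒜(n,k) P_k` for `k ≤ n` and
`G(n,k) = -𝒜(n,k)(Id - P_k)` for `k > n`. The dichotomy estimates give
`‖G(n,k)‖ ≤ C e^{-λ|n-k|}`, so `x_n = ∑_{k ∈ ℤ} G(n,k) y_k` converges, with
`‖x_n‖ ≤ C (∑_{j ∈ ℤ} e^{-λ|j|}) sup ‖y‖ = C (1+e^{-λ})/(1-e^{-λ}) sup ‖y‖`. Moreover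
`A_n G(n,k) = G(n+1,k)` except at `k = n+1`, where `G(n+1,n+1) - A_n G(n,n+1) = P + (Id - P) = Id`,
so `x_{n+1} - A_n x_n = y_{n+1}`.

For uniqueness, let `d` be a bounded solution of `d_{n+1} = A_n d_n`. Writing `d_n` as the image
of `d_{n-j}` shows `‖P_n d_n‖ ≤ C e^{-λj} sup ‖d‖`, and writing `d_{n+j}` as the image of `d_n`
shows `‖(Id - P_n) d_n‖ ≤ C e^{-λj} sup ‖d‖`, for every `j`; hence `d = 0`.
-/

open Filter Topology Real

section

variable {X : Type*} [NormedAddCommGroup X] [NormedSpace ℝ X]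

section Cocycle

variable (A : ℤ → X →L[ℝ] X)

lemma calA_self (n : ℤ) : calA A n n = ContinuousLinearMap.id ℝ X := by
  simp [calA]

lemma calA_succ {m n : ℤ} (h : n ≤ m) : calA A (m + 1) n = (A m).comp (calA A m n) := by
  have h₁ : (m + 1 - n).toNat = (m - n).toNat + 1 := by omega
  have h₂ : (m - n) ⊔ 0 = m - n := sup_eq_left.mpr (by omega)
  simp [calA, h₁, List.range_succ, h₂]

lemma calA_succ_self (n : ℤ) : calA A (n + 1) n = A n := by
  rw [calA_succ A le_rfl, calA_self]
  rfl

lemma calA_comp {m k n : ℤ} (hnk : n ≤ k) (hkm : k ≤ m) :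
    (calA A m k).comp (calA A k n) = calA A m n := by
  induction m, hkm using Int.leInduction with
  | base => rw [calA_self, ContinuousLinearMap.id_comp]
  | succ m hkm ih =>
    rw [calA_succ A hkm, calA_succ A (hnk.trans hkm), ContinuousLinearMap.comp_assoc, ih]

lemma calA_apply_of_forall_succ {d : ℤ → X} (hd : ∀ n, d (n + 1) = A n (d n)) {m n : ℤ}
    (hmn : m ≤ n) : calA A n m (d m) = d n := by
  induction n, hmn using Int.leInduction with
  | base => simp [calA_self]
  | succ n hmn ih => rw [calA_succ A hmn, ContinuousLinearMap.comp_apply, ih, hd]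

end Cocycle

structure IsExpDichotomy (A P : ℤ → X →L[ℝ] X) (C lam : ℝ) : Prop where
  proj_idem : ∀ m, (P m).comp (P m) = P m
  proj_comp : ∀ m, (P (m + 1)).comp (A m) = (A m).comp (P m)
  bijOn_ker : ∀ m, Set.BijOn (A m) (LinearMap.ker (P m : X →ₗ[ℝ] X) : Set X)
    (LinearMap.ker (P (m + 1) : X →ₗ[ℝ] X) : Set X)
  norm_stable_le : ∀ m n : ℤ, n ≤ m → ‖(calA A m n).comp (P n)‖ ≤ C * exp (-lam * (m - n))
  norm_unstable_le : ∀ m n : ℤ, m ≤ n → ∀ x w : X, w ∈ LinearMap.ker (P m : X →ₗ[ℝ] X) →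
    calA A n m w = x - P n x → ‖w‖ ≤ C * exp (-lam * (n - m)) * ‖x‖

lemma ExpDichotomy.exists_isExpDichotomy {A : ℤ → X →L[ℝ] X} {C lam : ℝ}
    (h : ExpDichotomy A C lam) : ∃ P, IsExpDichotomy A P C lam :=
  let ⟨P, h₁, h₂, h₃, h₄, h₅⟩ := h
  ⟨P, h₁, h₂, h₃, h₄, h₅⟩

/-- The paper's `𝒜(m,n)(Id - P_n)`, meaningful for `m ≤ n`. -/
noncomputable def unstableInv (A P : ℤ → X →L[ℝ] X) (m n : ℤ) (x : X) : X :=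
  Function.invFunOn (calA A n m) (LinearMap.ker (P m : X →ₗ[ℝ] X)) (x - P n x)

noncomputable def green (A P : ℤ → X →L[ℝ] X) (n k : ℤ) (v : X) : X :=
  if k ≤ n then calA A n k (P k v) else -unstableInv A P n k v

noncomputable def greenSum (A P : ℤ → X →L[ℝ] X) (y : ℤ → X) (n : ℤ) : X :=
  ∑' k, green A P n k (y k)

lemma hasSum_exp_neg_mul_abs {lam : ℝ} (hlam : 0 < lam) :
    HasSum (fun j : ℤ => exp (-lam * |(j : ℝ)|)) ((1 + exp (-lam)) / (1 - exp (-lam))) := by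
  have hq₀ : 0 ≤ exp (-lam) := (exp_pos _).le
  have hq₁ : exp (-lam) < 1 := exp_lt_one_iff.2 (by linarith)
  have hpow (j : ℕ) : exp (-lam * j) = exp (-lam) ^ j := by rw [mul_comm, exp_nat_mul]
  have hgeom := hasSum_geometric_of_lt_one hq₀ hq₁
  have hsum := HasSum.of_nat_of_neg_add_one (f := fun j : ℤ => exp (-lam * |(j : ℝ)|))
    (hgeom.congr_fun fun j => by rw [← hpow, Int.cast_natCast, Nat.abs_cast])
    ((hgeom.mul_left (exp (-lam))).congr_fun fun j => by
      rw [← pow_succ', ← hpow, Int.cast_neg, abs_neg]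
      push_cast
      rw [abs_of_nonneg (by positivity)])
  convert hsum using 1
  field_simp

lemma hasSum_exp_neg_mul_abs_sub {lam : ℝ} (hlam : 0 < lam) (n : ℤ) :
    HasSum (fun k : ℤ => exp (-lam * |(n : ℝ) - k|)) ((1 + exp (-lam)) / (1 - exp (-lam))) := by
  simpa [Function.comp_def] using (Equiv.subLeft n).hasSum_iff.2 (hasSum_exp_neg_mul_abs hlam)

lemma eq_zero_of_forall_norm_le_exp {E : Type*} [NormedAddCommGroup E] {v : E} {K lam : ℝ}
    (hlam : 0 < lam) (h : ∀ j : ℕ, ‖v‖ ≤ K * exp (-lam * j)) : v = 0 := by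
  have hlim : Tendsto (fun j : ℕ => K * exp (-lam * j)) atTop (𝓝 0) := by
    have := (tendsto_pow_atTop_nhds_zero_of_lt_one (exp_pos (-lam)).le
      (exp_lt_one_iff.2 (by linarith))).const_mul K
    simpa [← exp_nat_mul, mul_comm] using this
  exact norm_le_zero_iff.1 (ge_of_tendsto' hlim h)

namespace IsExpDichotomy

variable {A P : ℤ → X →L[ℝ] X} {C lam : ℝ}

lemma const_nonneg (hD : IsExpDichotomy A P C lam) : 0 ≤ C := by
  simpa using (norm_nonneg _).trans (hD.norm_stable_le 0 0 le_rfl)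

lemma proj_proj (hD : IsExpDichotomy A P C lam) (n : ℤ) (x : X) : P n (P n x) = P n x :=
  congr($(hD.proj_idem n) x)

lemma sub_proj_mem_ker (hD : IsExpDichotomy A P C lam) (n : ℤ) (x : X) :
    x - P n x ∈ LinearMap.ker (P n : X →ₗ[ℝ] X) := by
  simp [hD.proj_proj]

lemma proj_calA (hD : IsExpDichotomy A P C lam) {m n : ℤ} (hnm : n ≤ m) (x : X) :
    P m (calA A m n x) = calA A m n (P n x) := by
  induction m, hnm using Int.leInduction with
  | base => simp [calA_self]
  | succ m hnm ih =>
    rw [calA_succ A hnm, ContinuousLinearMap.comp_apply, ContinuousLinearMap.comp_apply, ← ih]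
    exact congr($(hD.proj_comp m) _)

lemma bijOn_calA (hD : IsExpDichotomy A P C lam) {m n : ℤ} (hnm : n ≤ m) :
    Set.BijOn (calA A m n) (LinearMap.ker (P n : X →ₗ[ℝ] X) : Set X)
      (LinearMap.ker (P m : X →ₗ[ℝ] X) : Set X) := by
  induction m, hnm using Int.leInduction with
  | base => simpa [calA_self] using Set.bijOn_id _
  | succ m hnm ih =>
    rw [calA_succ A hnm, ContinuousLinearMap.coe_comp]
    exact (hD.bijOn_ker m).comp ih

lemma exists_calA_eq_sub_proj (hD : IsExpDichotomy A P C lam) {m n : ℤ} (hmn : m ≤ n) (x : X) :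
    ∃ w ∈ (LinearMap.ker (P m : X →ₗ[ℝ] X) : Set X), calA A n m w = x - P n x :=
  (hD.bijOn_calA hmn).surjOn (hD.sub_proj_mem_ker n x)

lemma unstableInv_mem_ker (hD : IsExpDichotomy A P C lam) {m n : ℤ} (hmn : m ≤ n) (x : X) :
    unstableInv A P m n x ∈ (LinearMap.ker (P m : X →ₗ[ℝ] X) : Set X) :=
  Function.invFunOn_mem (hD.exists_calA_eq_sub_proj hmn x)

lemma calA_unstableInv (hD : IsExpDichotomy A P C lam) {m n : ℤ} (hmn : m ≤ n) (x : X) :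
    calA A n m (unstableInv A P m n x) = x - P n x :=
  Function.invFunOn_eq (hD.exists_calA_eq_sub_proj hmn x)

lemma norm_unstableInv_le (hD : IsExpDichotomy A P C lam) {m n : ℤ} (hmn : m ≤ n) (x : X) :
    ‖unstableInv A P m n x‖ ≤ C * exp (-lam * (n - m)) * ‖x‖ :=
  hD.norm_unstable_le m n hmn x _ (hD.unstableInv_mem_ker hmn x) (hD.calA_unstableInv hmn x)

lemma apply_unstableInv (hD : IsExpDichotomy A P C lam) {m n : ℤ} (hmn : m < n) (x : X) :
    A m (unstableInv A P m n x) = unstableInv A P (m + 1) n x := by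
  refine (hD.bijOn_calA hmn).injOn ((hD.bijOn_ker m).mapsTo (hD.unstableInv_mem_ker hmn.le x))
    (hD.unstableInv_mem_ker hmn x) ?_
  rw [hD.calA_unstableInv hmn, ← calA_succ_self A m, ← ContinuousLinearMap.comp_apply,
    calA_comp A (by omega) hmn, hD.calA_unstableInv hmn.le]

lemma norm_green_le (hD : IsExpDichotomy A P C lam) (n k : ℤ) (v : X) :
    ‖green A P n k v‖ ≤ C * exp (-lam * |(n : ℝ) - k|) * ‖v‖ := by
  unfold green
  split_ifs with hkn
  · rw [abs_of_nonneg (sub_nonneg.2 (Int.cast_le.2 hkn))]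
    exact ((calA A n k).comp (P k)).le_opNorm v |>.trans
      (mul_le_mul_of_nonneg_right (hD.norm_stable_le n k hkn) (norm_nonneg v))
  · rw [norm_neg, abs_sub_comm, abs_of_nonneg (sub_nonneg.2 (Int.cast_le.2 (not_le.1 hkn).le))]
    exact hD.norm_unstableInv_le (not_le.1 hkn).le v

lemma apply_green (hD : IsExpDichotomy A P C lam) {n k : ℤ} (hk : k ≠ n + 1) (v : X) :
    A n (green A P n k v) = green A P (n + 1) k v := by
  unfold green
  rcases le_or_gt k n with hkn | hnk
  · rw [if_pos hkn, if_pos (by omega), calA_succ A hkn]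
    rfl
  · rw [if_neg (by omega), if_neg (by omega), map_neg, hD.apply_unstableInv (by omega)]

lemma green_succ_self_sub (hD : IsExpDichotomy A P C lam) (n : ℤ) (v : X) :
    green A P (n + 1) (n + 1) v - A n (green A P n (n + 1) v) = v := by
  have hv := hD.calA_unstableInv (lt_add_one n).le v
  rw [calA_succ_self] at hv
  simp [green, calA_self, hv]

section Bounded

variable {y : ℤ → X} {Y : ℝ}

lemma norm_green_apply_le (hD : IsExpDichotomy A P C lam) (hY : ∀ k, ‖y k‖ ≤ Y) (n k : ℤ) :
    ‖green A P n k (y k)‖ ≤ C * exp (-lam * |(n : ℝ) - k|) * Y :=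
  (hD.norm_green_le n k (y k)).trans
    (mul_le_mul_of_nonneg_left (hY k) (mul_nonneg hD.const_nonneg (exp_pos _).le))

lemma summable_green [CompleteSpace X] (hD : IsExpDichotomy A P C lam) (hlam : 0 < lam)
    (hY : ∀ k, ‖y k‖ ≤ Y) (n : ℤ) : Summable fun k => green A P n k (y k) :=
  .of_norm_bounded (((hasSum_exp_neg_mul_abs_sub hlam n).summable.mul_left C).mul_right Y)
    (hD.norm_green_apply_le hY n)

lemma norm_greenSum_le (hD : IsExpDichotomy A P C lam) (hlam : 0 < lam)
    (hY : ∀ k, ‖y k‖ ≤ Y) (n : ℤ) :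
    ‖greenSum A P y n‖ ≤ C * (1 + exp (-lam)) / (1 - exp (-lam)) * Y := by
  rw [mul_div_assoc]
  exact tsum_of_norm_bounded (((hasSum_exp_neg_mul_abs_sub hlam n).mul_left C).mul_right Y)
    (hD.norm_green_apply_le hY n)

lemma greenSum_succ_sub [CompleteSpace X] (hD : IsExpDichotomy A P C lam) (hlam : 0 < lam)
    (hY : ∀ k, ‖y k‖ ≤ Y) (n : ℤ) :
    greenSum A P y (n + 1) - A n (greenSum A P y n) = y (n + 1) := by
  have hs := hD.summable_green hlam hY
  rw [greenSum, greenSum, (A n).map_tsum (hs n), ← (hs (n + 1)).tsum_sub ((A n).summable (hs n)),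
    tsum_eq_single (n + 1) fun k hk => by rw [hD.apply_green hk, sub_self]]
  exact hD.green_succ_self_sub n _

end Bounded

lemma eq_zero_of_bddAbove (hD : IsExpDichotomy A P C lam) (hlam : 0 < lam) {d : ℤ → X}
    (hb : BddAbove (Set.range fun n => ‖d n‖)) (hd : ∀ n, d (n + 1) = A n (d n)) : d = 0 := by
  obtain ⟨M, hM⟩ := hb
  have hdM (n : ℤ) : ‖d n‖ ≤ M := hM ⟨n, rfl⟩
  have hC := hD.const_nonneg
  funext n
  have hstable : P n (d n) = 0 := eq_zero_of_forall_norm_le_exp hlam fun j => by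
    have hle : n - j ≤ n := by omega
    calc ‖P n (d n)‖ = ‖(calA A n (n - j)).comp (P (n - j)) (d (n - j))‖ := by
          rw [← calA_apply_of_forall_succ A hd hle, hD.proj_calA hle]
          rfl
      _ ≤ C * exp (-lam * (n - (n - j : ℤ))) * M :=
          (ContinuousLinearMap.le_opNorm _ _).trans
            (mul_le_mul (hD.norm_stable_le n _ hle) (hdM _) (norm_nonneg _) (by positivity))
      _ = C * M * exp (-lam * j) := by push_cast; ring_nf
  have hunstable : d n - P n (d n) = 0 := eq_zero_of_forall_norm_le_exp hlam fun j => by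
    have hle : n ≤ n + j := by omega
    calc ‖d n - P n (d n)‖ ≤ C * exp (-lam * ((n + j : ℤ) - n)) * ‖d (n + j)‖ :=
          hD.norm_unstable_le n (n + j) hle _ _ (hD.sub_proj_mem_ker n _) (by
            rw [map_sub, ← hD.proj_calA hle, calA_apply_of_forall_succ A hd hle])
      _ ≤ C * exp (-lam * ((n + j : ℤ) - n)) * M :=
          mul_le_mul_of_nonneg_left (hdM _) (by positivity)
      _ = C * M * exp (-lam * j) := by push_cast; ring_nf
  simpa [hstable] using hunstable

lemma eq_of_bddAbove (hD : IsExpDichotomy A P C lam) (hlam : 0 < lam) {x x' : ℤ → X}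
    (hx : BddAbove (Set.range fun n => ‖x n‖)) (hx' : BddAbove (Set.range fun n => ‖x' n‖))
    (h : ∀ n, x (n + 1) - A n (x n) = x' (n + 1) - A n (x' n)) : x = x' := by
  obtain ⟨M, hM⟩ := hx
  obtain ⟨M', hM'⟩ := hx'
  have hb : BddAbove (Set.range fun n => ‖(x - x') n‖) := ⟨M + M', by
    rintro _ ⟨n, rfl⟩
    exact (norm_sub_le _ _).trans (add_le_add (hM ⟨n, rfl⟩) (hM' ⟨n, rfl⟩))⟩
  refine sub_eq_zero.1 (hD.eq_zero_of_bddAbove hlam hb fun n => ?_)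
  simp only [Pi.sub_apply, map_sub]
  rw [sub_eq_sub_iff_sub_eq_sub, h n]

end IsExpDichotomy

end

theorem dichotomy_admissibility_unique_general
    {X : Type*} [NormedAddCommGroup X] [NormedSpace ℝ X] [CompleteSpace X]
    (A : ℤ → X →L[ℝ] X) (C lam : ℝ) (hlam : 0 < lam)
    (h : ExpDichotomy A C lam)
    (y : ℤ → X) (hy : BddAbove (Set.range fun n => ‖y n‖)) :
    (∃! x : ℤ → X, BddAbove (Set.range fun n => ‖x n‖) ∧
        ∀ n : ℤ, x (n + 1) - A n (x n) = y (n + 1)) ∧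
    (∀ x : ℤ → X, (BddAbove (Set.range fun n => ‖x n‖) ∧
        ∀ n : ℤ, x (n + 1) - A n (x n) = y (n + 1)) →
      ∀ n : ℤ, ‖x n‖ ≤ C * (1 + Real.exp (-lam)) / (1 - Real.exp (-lam)) * ⨆ m : ℤ, ‖y m‖) := by
  obtain ⟨P, hD⟩ := h.exists_isExpDichotomy
  have hY : ∀ k, ‖y k‖ ≤ ⨆ m : ℤ, ‖y m‖ := le_ciSup hy
  have hbound := hD.norm_greenSum_le hlam hY
  have hsol := hD.greenSum_succ_sub hlam hY
  have hbdd : BddAbove (Set.range fun n => ‖greenSum A P y n‖) :=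
    ⟨_, Set.forall_mem_range.2 hbound⟩
  have huniq : ∀ x : ℤ → X, (BddAbove (Set.range fun n => ‖x n‖) ∧
      ∀ n : ℤ, x (n + 1) - A n (x n) = y (n + 1)) → x = greenSum A P y :=
    fun x hx => hD.eq_of_bddAbove hlam hx.1 hbdd fun n => (hx.2 n).trans (hsol n).symm
  refine ⟨⟨greenSum A P y, ⟨hbdd, hsol⟩, huniq⟩, fun x hx n => ?_⟩
  rw [huniq x hx]
  exact hbound n

/-- If `(A_m)_{m∈ℤ}` admits an exponential dichotomy with constants `C, lam > 0`, then for every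
bounded sequence `y` there is a unique bounded sequence `x` with `x_{n+1} - A_n x_n = y_{n+1}`
for all `n`, and moreover `sup_n ‖x_n‖ ≤ C (1+e^{-lam})/(1-e^{-lam}) · sup_n ‖y_n‖`. -/
theorem dichotomy_admissibility_unique
    {X : Type*} [NormedAddCommGroup X] [NormedSpace ℝ X] [CompleteSpace X]
    (A : ℤ → X →L[ℝ] X) (C lam : ℝ) (hC : 0 < C) (hlam : 0 < lam)
    (h : ExpDichotomy A C lam)
    (y : ℤ → X) (hy : BddAbove (Set.range fun n => ‖y n‖)) :
    (∃! x : ℤ → X, BddAbove (Set.range fun n => ‖x n‖) ∧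
        ∀ n : ℤ, x (n + 1) - A n (x n) = y (n + 1)) ∧
    (∀ x : ℤ → X, (BddAbove (Set.range fun n => ‖x n‖) ∧
        ∀ n : ℤ, x (n + 1) - A n (x n) = y (n + 1)) →
      ∀ n : ℤ, ‖x n‖ ≤ C * (1 + Real.exp (-lam)) / (1 - Real.exp (-lam)) * ⨆ m : ℤ, ‖y m‖) :=
  dichotomy_admissibility_unique_general A C lam hlam h y hy
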